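/- For every t ≥ 0 and every g ∈ L²(ℝ × U, e^{−|x|} dx ⊗ λ), the function T^U_t g belongs to L²(ℝ × U, e^{−|x|} dx ⊗ λ) and ‖T^U_t g‖ ≤ K_{√t} ‖g‖, where K_s = (∫_ℝ e^{s|z|} p_1(z) dz)^{1/2} is finite. -/

import Mathlib

open MeasureTheory Real Filter Topology

/-- The heat kernel `p_t(x) = (2πt)^{-1/2} exp(-x²/(2t))`. -/
noncomputable def heatKernel (t x : ℝ) : ℝ :=
  (Real.sqrt (2 * Real.pi * t))⁻¹ * Real.exp (-(x ^ 2) / (2 * t))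

/-- The semigroup `T^U_t g(a,x) = ∫ p_t(x-y) g(a,y) dy` acting in the spatial variable,
with `T^U_0 g = g`. -/
noncomputable def heatOpU {U : Type*} (t : ℝ) (g : U × ℝ → ℝ) (q : U × ℝ) : ℝ :=
  if t = 0 then g q else ∫ y : ℝ, heatKernel t (q.2 - y) * g (q.1, y)

/-!
For `t > 0` the heat kernel `p_t` is a probability density, so Cauchy–Schwarz gives
`|T_t g(a,x)|² ≤ ∫ p_t(x-y) g(a,y)² dy`. Since `e^{-|x|} ≤ e^{|x-y|} e^{-|y|}`, Tonelli bounds the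
weighted norm of `T_t g` by `∫ e^{|z|} p_t(z) dz · ‖g‖²`, and the substitution `z = √t w` (the map
`w ↦ √t w` sends the standard Gaussian to the one of variance `t`) turns the constant into
`∫ e^{√t|w|} p_1(w) dw`.
-/

open scoped ENNReal
open ProbabilityTheory

section
variable {α : Type*} [MeasurableSpace α] {μ : Measure α}

theorem ENNReal.sq_lintegral_mul_le {k F : α → ℝ≥0∞} (hk : AEMeasurable k μ)
    (hF : AEMeasurable F μ) :
    (∫⁻ a, k a * F a ∂μ) ^ 2 ≤ (∫⁻ a, k a ∂μ) * ∫⁻ a, k a * F a ^ 2 ∂μ := by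
  have hsplit : ∀ a, k a * F a = k a ^ (1 / 2 : ℝ) * (k a * F a ^ 2) ^ (1 / 2 : ℝ) := by
    intro a
    rw [← ENNReal.mul_rpow_of_nonneg _ _ (by norm_num),
      show k a * (k a * F a ^ 2) = (k a * F a) ^ 2 by ring, ← ENNReal.rpow_natCast,
      ← ENNReal.rpow_mul, Nat.cast_ofNat, mul_one_div_cancel two_ne_zero, ENNReal.rpow_one]
  have hHolder : ∫⁻ a, k a * F a ∂μ ≤
      (∫⁻ a, k a ∂μ) ^ (1 / 2 : ℝ) * (∫⁻ a, k a * F a ^ 2 ∂μ) ^ (1 / 2 : ℝ) := by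
    simp_rw [hsplit]
    exact lintegral_mul_norm_pow_le hk (hk.mul (hF.pow_const 2)) (by norm_num) (by norm_num)
      (by norm_num)
  calc (∫⁻ a, k a * F a ∂μ) ^ 2
      ≤ ((∫⁻ a, k a ∂μ) ^ (1 / 2 : ℝ) * (∫⁻ a, k a * F a ^ 2 ∂μ) ^ (1 / 2 : ℝ)) ^ 2 :=
        pow_le_pow_left' hHolder 2
    _ = (∫⁻ a, k a ∂μ) * ∫⁻ a, k a * F a ^ 2 ∂μ := by
        rw [mul_pow, ← ENNReal.rpow_natCast, ← ENNReal.rpow_natCast, ← ENNReal.rpow_mul,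
          ← ENNReal.rpow_mul]
        norm_num

theorem ofReal_sq_integral_mul_le_lintegral {p f : α → ℝ} (hp : Measurable p) (hp0 : 0 ≤ p)
    (hp1 : ∫⁻ a, ENNReal.ofReal (p a) ∂μ = 1) (hf : Measurable f) :
    ENNReal.ofReal ((∫ a, p a * f a ∂μ) ^ 2) ≤
      ∫⁻ a, ENNReal.ofReal (p a) * ENNReal.ofReal (f a ^ 2) ∂μ := by
  have hsq : ∀ x : ℝ, ENNReal.ofReal (x ^ 2) = ‖x‖ₑ ^ 2 := fun x => by
    rw [Real.enorm_eq_ofReal_abs, ← ENNReal.ofReal_pow (abs_nonneg x), sq_abs]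
  have hmul : ∀ a, ‖p a * f a‖ₑ = ENNReal.ofReal (p a) * ‖f a‖ₑ := fun a => by
    rw [enorm_mul, Real.enorm_of_nonneg (hp0 a)]
  simp_rw [hsq]
  calc ‖∫ a, p a * f a ∂μ‖ₑ ^ 2
      ≤ (∫⁻ a, ENNReal.ofReal (p a) * ‖f a‖ₑ ∂μ) ^ 2 := by
        simp_rw [← hmul]
        exact pow_le_pow_left' (enorm_integral_le_lintegral_enorm _) 2
    _ ≤ _ := by
        simpa [hp1] using ENNReal.sq_lintegral_mul_le (μ := μ)
          (ENNReal.measurable_ofReal.comp hp).aemeasurable hf.enorm.aemeasurable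

theorem integrable_and_integral_le_of_lintegral_ofReal_le {f : α → ℝ} (hf0 : 0 ≤ f)
    (hf : AEStronglyMeasurable f μ) {C : ℝ} (hC : 0 ≤ C)
    (h : ∫⁻ a, ENNReal.ofReal (f a) ∂μ ≤ ENNReal.ofReal C) :
    Integrable f μ ∧ ∫ a, f a ∂μ ≤ C := by
  refine ⟨⟨hf, (hasFiniteIntegral_iff_ofReal (ae_of_all _ hf0)).2
    (h.trans_lt ENNReal.ofReal_lt_top)⟩, ?_⟩
  rw [integral_eq_lintegral_of_nonneg_ae (ae_of_all _ hf0) hf]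
  exact ENNReal.toReal_le_of_le_ofReal hC h

end

section
variable {G : Type*} [MeasurableSpace G] [AddGroup G] [MeasurableAdd₂ G] [MeasurableNeg G]
  {μ : Measure G} [SFinite μ] [μ.IsAddRightInvariant]

theorem lintegral_conv_mul_weight_le {k F w v : G → ℝ≥0∞} (hk : Measurable k)
    (hF : Measurable F) (hw : Measurable w) (hv : Measurable v)
    (hwv : ∀ x y, w x ≤ v (x - y) * w y) :
    ∫⁻ x, (∫⁻ y, k (x - y) * F y ∂μ) * w x ∂μ ≤
      (∫⁻ z, k z * v z ∂μ) * ∫⁻ y, F y * w y ∂μ := by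
  calc ∫⁻ x, (∫⁻ y, k (x - y) * F y ∂μ) * w x ∂μ
      = ∫⁻ x, ∫⁻ y, k (x - y) * F y * w x ∂μ ∂μ := by
        refine lintegral_congr fun x => (lintegral_mul_const _ ?_).symm
        exact (hk.comp (measurable_const.sub measurable_id)).mul hF
    _ ≤ ∫⁻ x, ∫⁻ y, k (x - y) * v (x - y) * (F y * w y) ∂μ ∂μ := by
        refine lintegral_mono fun x => lintegral_mono fun y => ?_
        calc k (x - y) * F y * w x ≤ k (x - y) * F y * (v (x - y) * w y) := by gcongr; apply hwv
          _ = _ := by ring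
    _ = ∫⁻ y, ∫⁻ x, k (x - y) * v (x - y) * (F y * w y) ∂μ ∂μ :=
        lintegral_lintegral_swap (((hk.comp measurable_sub).mul (hv.comp measurable_sub)).mul
          ((hF.mul hw).comp measurable_snd)).aemeasurable
    _ = ∫⁻ y, (∫⁻ z, k z * v z ∂μ) * (F y * w y) ∂μ := by
        refine lintegral_congr fun y => ?_
        rw [lintegral_mul_const _ (by fun_prop),
          lintegral_sub_right_eq_self (fun z => k z * v z) y]
    _ = _ := lintegral_const_mul _ (hF.mul hw)

end

lemma heatKernel_nonneg (t x : ℝ) : 0 ≤ heatKernel t x := by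
  unfold heatKernel
  positivity

@[fun_prop]
lemma measurable_heatKernel (t : ℝ) : Measurable (heatKernel t) := by
  unfold heatKernel
  fun_prop

lemma heatKernel_eq_gaussianPDFReal {t : ℝ} (ht : 0 ≤ t) :
    heatKernel t = gaussianPDFReal 0 t.toNNReal := by
  ext x
  simp [heatKernel, gaussianPDFReal, ht]

lemma integral_gaussianReal_eq_integral_mul_heatKernel {t : ℝ} (ht : 0 < t) (f : ℝ → ℝ) :
    ∫ x, f x ∂gaussianReal 0 t.toNNReal = ∫ x, f x * heatKernel t x := by
  rw [integral_gaussianReal_eq_integral_smul (by simpa using ht),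
    heatKernel_eq_gaussianPDFReal ht.le]
  simp_rw [smul_eq_mul, mul_comm]

lemma integrable_exp_mul_abs_mul_heatKernel (s : ℝ) {t : ℝ} (ht : 0 < t) :
    Integrable (fun z => exp (s * |z|) * heatKernel t z) := by
  have h : Integrable (fun z => exp (s * |z|)) (gaussianReal 0 t.toNNReal) :=
    integrable_exp_mul_abs (X := id) (integrable_exp_mul_gaussianReal s)
      (integrable_exp_mul_gaussianReal (-s))
  rw [gaussianReal_of_var_ne_zero _ (by simpa using ht),
    integrable_withDensity_iff_integrable_smul' (measurable_gaussianPDF _ _)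
      (ae_of_all _ fun _ => gaussianPDF_lt_top)] at h
  simpa [toReal_gaussianPDF, heatKernel_eq_gaussianPDFReal ht.le, mul_comm] using h

lemma integral_exp_abs_mul_heatKernel {t : ℝ} (ht : 0 < t) :
    ∫ z, exp |z| * heatKernel t z = ∫ z, exp (√t * |z|) * heatKernel 1 z := by
  have hmap : (gaussianReal 0 (1 : ℝ).toNNReal).map (√t * ·) = gaussianReal 0 t.toNNReal := by
    rw [gaussianReal_map_const_mul]
    congr 1
    · simp
    · ext; simp [ht.le]
  rw [← integral_gaussianReal_eq_integral_mul_heatKernel ht,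
    ← integral_gaussianReal_eq_integral_mul_heatKernel one_pos, ← hmap,
    integral_map (by fun_prop) (by fun_prop)]
  simp_rw [abs_mul, abs_of_nonneg (sqrt_nonneg t)]

lemma lintegral_ofReal_heatKernel_sub {t : ℝ} (ht : 0 < t) (x : ℝ) :
    ∫⁻ y, ENNReal.ofReal (heatKernel t (x - y)) = 1 := by
  rw [lintegral_sub_left_eq_self (fun z => ENNReal.ofReal (heatKernel t z)) x,
    heatKernel_eq_gaussianPDFReal ht.le, lintegral_gaussianPDFReal_eq_one 0 (by simpa using ht)]

lemma heatOpU_zero {U : Type*} (g : U × ℝ → ℝ) : heatOpU 0 g = g :=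
  funext fun _ => if_pos rfl

lemma heatOpU_of_ne_zero {U : Type*} {t : ℝ} (ht : t ≠ 0) (g : U × ℝ → ℝ) (q : U × ℝ) :
    heatOpU t g q = ∫ y, heatKernel t (q.2 - y) * g (q.1, y) :=
  if_neg ht

@[fun_prop]
lemma measurable_heatOpU {U : Type*} [MeasurableSpace U] (t : ℝ) {g : U × ℝ → ℝ}
    (hg : Measurable g) : Measurable (heatOpU t g) := by
  by_cases ht : t = 0
  · rwa [ht, heatOpU_zero]
  · simp_rw [funext (heatOpU_of_ne_zero ht g)]
    have hker : Measurable fun p : (U × ℝ) × ℝ => heatKernel t (p.1.2 - p.2) * g (p.1.1, p.2) := by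
      fun_prop
    exact hker.stronglyMeasurable.integral_prod_right'.measurable

lemma ofReal_heatOpU_sq_le {U : Type*} [MeasurableSpace U] {t : ℝ} (ht : 0 < t)
    {g : U × ℝ → ℝ} (hg : Measurable g) (q : U × ℝ) :
    ENNReal.ofReal (heatOpU t g q ^ 2) ≤
      ∫⁻ y, ENNReal.ofReal (heatKernel t (q.2 - y)) * ENNReal.ofReal (g (q.1, y) ^ 2) := by
  rw [heatOpU_of_ne_zero ht.ne']
  exact ofReal_sq_integral_mul_le_lintegral (by fun_prop) (fun y => heatKernel_nonneg _ _)
    (lintegral_ofReal_heatKernel_sub ht q.2) (by fun_prop)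

lemma exp_neg_abs_le_exp_abs_sub_mul (x y : ℝ) : exp (-|x|) ≤ exp |x - y| * exp (-|y|) := by
  rw [← exp_add, exp_le_exp]
  linarith [abs_sub_abs_le_abs_sub y x, abs_sub_comm y x]

lemma lintegral_heatOpU_sq_mul_exp_le {U : Type*} [MeasurableSpace U] (lam : Measure U)
    [SFinite lam] {t : ℝ} (ht : 0 < t) {g : U × ℝ → ℝ} (hg : Measurable g) :
    ∫⁻ q, ENNReal.ofReal (heatOpU t g q ^ 2 * exp (-|q.2|)) ∂(lam.prod volume) ≤
      ENNReal.ofReal (∫ z, exp |z| * heatKernel t z) *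
        ∫⁻ q, ENNReal.ofReal (g q ^ 2 * exp (-|q.2|)) ∂(lam.prod volume) := by
  have hK : ENNReal.ofReal (∫ z, exp |z| * heatKernel t z) =
      ∫⁻ z, ENNReal.ofReal (heatKernel t z) * ENNReal.ofReal (exp |z|) := by
    simpa [← ENNReal.ofReal_mul (heatKernel_nonneg _ _), mul_comm] using
      ofReal_integral_eq_lintegral_ofReal (integrable_exp_mul_abs_mul_heatKernel 1 ht)
        (ae_of_all _ fun z => mul_nonneg (exp_nonneg _) (heatKernel_nonneg t z))
  rw [lintegral_prod _ (by fun_prop), lintegral_prod _ (by fun_prop),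
    ← lintegral_const_mul _ (by fun_prop), hK]
  refine lintegral_mono fun a => ?_
  simp_rw [ENNReal.ofReal_mul (sq_nonneg _)]
  calc ∫⁻ x, ENNReal.ofReal (heatOpU t g (a, x) ^ 2) * ENNReal.ofReal (exp (-|x|))
      ≤ ∫⁻ x, (∫⁻ y, ENNReal.ofReal (heatKernel t (x - y)) * ENNReal.ofReal (g (a, y) ^ 2)) *
          ENNReal.ofReal (exp (-|x|)) :=
        lintegral_mono fun x => mul_le_mul_left (ofReal_heatOpU_sq_le ht hg (a, x)) _
    _ ≤ _ := by
        refine lintegral_conv_mul_weight_le (by fun_prop) (by fun_prop) (by fun_prop)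
          (by fun_prop) fun x y => ?_
        rw [← ENNReal.ofReal_mul (exp_nonneg _)]
        exact ENNReal.ofReal_le_ofReal (exp_neg_abs_le_exp_abs_sub_mul x y)

/-- For every `t ≥ 0` and every `g ∈ L²(ℝ × U, e^{-|x|}dx ⊗ λ)`, the function `T^U_t g`
belongs to `L²(ℝ × U, e^{-|x|}dx ⊗ λ)` and `‖T^U_t g‖ ≤ K_{√t} ‖g‖`, where
`K_s = (∫ e^{s|z|} p_1(z) dz)^{1/2}` is finite. -/
theorem heatOpU_bounded {U : Type*} [MeasurableSpace U] (lam : Measure U) [SigmaFinite lam]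
    (t : ℝ) (ht : 0 ≤ t) (g : U × ℝ → ℝ) (hg : Measurable g)
    (hg2 : Integrable (fun q : U × ℝ => g q ^ 2 * Real.exp (-|q.2|)) (lam.prod volume)) :
    Integrable (fun z : ℝ => Real.exp (Real.sqrt t * |z|) * heatKernel 1 z) ∧
    Integrable (fun q : U × ℝ => heatOpU t g q ^ 2 * Real.exp (-|q.2|)) (lam.prod volume) ∧
    Real.sqrt (∫ q : U × ℝ, heatOpU t g q ^ 2 * Real.exp (-|q.2|) ∂(lam.prod volume)) ≤
      Real.sqrt (∫ z : ℝ, Real.exp (Real.sqrt t * |z|) * heatKernel 1 z) *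
        Real.sqrt (∫ q : U × ℝ, g q ^ 2 * Real.exp (-|q.2|) ∂(lam.prod volume)) := by
  have hK := integrable_exp_mul_abs_mul_heatKernel (√t) one_pos
  rcases ht.eq_or_lt with rfl | ht
  · have hK1 : ∫ z, exp (√0 * |z|) * heatKernel 1 z = 1 := by
      simpa [heatKernel_eq_gaussianPDFReal zero_le_one] using
        integral_gaussianPDFReal_eq_one 0 one_ne_zero
    refine ⟨hK, by rwa [heatOpU_zero], ?_⟩
    rw [heatOpU_zero, hK1, sqrt_one, one_mul]
  set K := ∫ z, exp (√t * |z|) * heatKernel 1 z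
  set B := ∫ q, g q ^ 2 * exp (-|q.2|) ∂(lam.prod volume)
  have hK0 : 0 ≤ K := integral_nonneg fun z => mul_nonneg (exp_nonneg _) (heatKernel_nonneg _ _)
  have hB0 : 0 ≤ B := integral_nonneg fun q => mul_nonneg (sq_nonneg _) (exp_nonneg _)
  have hbound := lintegral_heatOpU_sq_mul_exp_le lam ht hg
  rw [integral_exp_abs_mul_heatKernel ht, ← ofReal_integral_eq_lintegral_ofReal hg2
    (ae_of_all _ fun q => mul_nonneg (sq_nonneg _) (exp_nonneg _)),
    ← ENNReal.ofReal_mul hK0] at hbound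
  have hTmeas : Measurable fun q : U × ℝ => heatOpU t g q ^ 2 * exp (-|q.2|) := by fun_prop
  obtain ⟨hTint, hTle⟩ := integrable_and_integral_le_of_lintegral_ofReal_le
    (fun q => mul_nonneg (sq_nonneg _) (exp_nonneg _)) hTmeas.aestronglyMeasurable
    (mul_nonneg hK0 hB0) hbound
  exact ⟨hK, hTint, (sqrt_le_sqrt hTle).trans_eq (sqrt_mul hK0 B)⟩
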